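/- arXiv:1305.2952 — 4 statements merged into one kernel-verified Lean document; each statement's English description precedes it below -/
import Mathlib

section
/- Equipartition of energy for traveling plane waves: let n be a natural number, let E_s, E_v, A_sv, A_vs be real n×n matrices with E_s and E_v symmetric, and suppose the block symmetry relation E_s * A_sv = (E_v * A_vs)ᵀ holds. If r_s, r_v ∈ ℝⁿ and λ ∈ ℝ with λ ≠ 0 satisfy A_sv * r_v = λ • r_s and A_vs * r_s = λ • r_v, then the kinetic and potential energies carried by the corresponding plane wave are equal: r_vᵀ * E_v * r_v = r_sᵀ * E_s * r_s. -/
open Matrix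

/-- Equipartition of energy for traveling plane waves. -/
theorem equipartition_of_energy (n : ℕ)
    (Es Ev Asv Avs : Matrix (Fin n) (Fin n) ℝ)
    (hEs : Es.IsSymm) (hEv : Ev.IsSymm)
    (hblock : Es * Asv = (Ev * Avs)ᵀ)
    (rs rv : Fin n → ℝ) (lam : ℝ) (hlam : lam ≠ 0)
    (h1 : Asv.mulVec rv = lam • rs)
    (h2 : Avs.mulVec rs = lam • rv) :
    rv ⬝ᵥ Ev.mulVec rv = rs ⬝ᵥ Es.mulVec rs := by
  have key : lam * (rs ⬝ᵥ Es.mulVec rs) = lam * (rv ⬝ᵥ Ev.mulVec rv) := by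
    calc lam * (rs ⬝ᵥ Es.mulVec rs)
        = rs ⬝ᵥ Es.mulVec (lam • rs) := by
          rw [mulVec_smul, dotProduct_smul, smul_eq_mul]
      _ = rs ⬝ᵥ (Es * Asv).mulVec rv := by rw [← h1, mulVec_mulVec]
      _ = rs ⬝ᵥ ((Ev * Avs)ᵀ).mulVec rv := by rw [hblock]
      _ = ((Ev * Avs).mulVec rs) ⬝ᵥ rv := by
          rw [mulVec_transpose, dotProduct_comm, ← dotProduct_mulVec, dotProduct_comm]
      _ = (Ev.mulVec (lam • rv)) ⬝ᵥ rv := by rw [← h2, mulVec_mulVec]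
      _ = lam * (rv ⬝ᵥ Ev.mulVec rv) := by
          rw [mulVec_smul, smul_dotProduct, smul_eq_mul, dotProduct_comm]
  exact (mul_left_cancel₀ hlam key).symm
end

section
/- Recovery of a full eigenvector from the reduced eigenproblem: let n be a natural number, let E_s, E_v, A_sv, A_vs be real n×n matrices with E_s symmetric and E_v invertible, and suppose the block symmetry relation E_s * A_sv = (E_v * A_vs)ᵀ holds. If r_v ∈ ℝⁿ and λ ∈ ℝ with λ ≠ 0 satisfy A_svᵀ * E_s * A_sv * r_v = λ² • (E_v * r_v), then setting r_s := (1/λ) • (A_sv * r_v) yields a solution of the full block eigenproblem: A_sv * r_v = λ • r_s and A_vs * r_s = λ • r_v. -/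
open Matrix

/-- Recovery of a full eigenvector from the reduced eigenproblem. -/
theorem recover_full_eigenvector (n : ℕ)
    (Es Ev Asv Avs : Matrix (Fin n) (Fin n) ℝ)
    (hEs : Es.IsSymm) (hEv : IsUnit Ev)
    (hblock : Es * Asv = (Ev * Avs)ᵀ)
    (rv : Fin n → ℝ) (lam : ℝ) (hlam : lam ≠ 0)
    (hred : (Asvᵀ * Es * Asv).mulVec rv = (lam ^ 2) • (Ev.mulVec rv)) :
    Asv.mulVec rv = lam • ((1 / lam) • (Asv.mulVec rv)) ∧
      Avs.mulVec ((1 / lam) • (Asv.mulVec rv)) = lam • rv := by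
  have hEvAvs : Ev * Avs = Asvᵀ * Es := by
    have := congrArg Matrix.transpose hblock
    simpa [Matrix.transpose_mul, hEs.eq] using this.symm
  have hkey : (Avs * Asv).mulVec rv = (lam ^ 2) • rv := by
    have h1 : Ev.mulVec ((Avs * Asv).mulVec rv) = Ev.mulVec ((lam ^ 2) • rv) := by
      rw [← Matrix.mulVec_mulVec]
      calc Ev.mulVec (Avs.mulVec (Asv.mulVec rv))
          = (Ev * Avs).mulVec (Asv.mulVec rv) := by rw [Matrix.mulVec_mulVec]
        _ = (Asvᵀ * Es).mulVec (Asv.mulVec rv) := by rw [hEvAvs]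
        _ = (Asvᵀ * Es * Asv).mulVec rv := by rw [Matrix.mulVec_mulVec]
        _ = (lam ^ 2) • (Ev.mulVec rv) := hred
        _ = Ev.mulVec ((lam ^ 2) • rv) := by rw [Matrix.mulVec_smul]
    have hdet := (Matrix.isUnit_iff_isUnit_det Ev).mp hEv
    have := congrArg (fun v => Ev⁻¹.mulVec v) h1
    simpa [Matrix.mulVec_mulVec, ← Matrix.mul_assoc, Matrix.nonsing_inv_mul Ev hdet] using this
  constructor
  · rw [smul_smul, mul_one_div, div_self hlam, one_smul]
  · rw [Matrix.mulVec_smul, Matrix.mulVec_mulVec, hkey, smul_smul]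
    rw [one_div, inv_mul_eq_div, sq, mul_div_assoc, div_self hlam, mul_one]
end

section
/- Triangular factorization of the kinetic energy matrix: let ρ, ρ_f, m₁, m₃ be real numbers with m₁ > 0 and m₃ > 0, set Δ₁ := ρ·m₁ - ρ_f² and Δ₃ := ρ·m₃ - ρ_f², and assume Δ₁ ≥ 0 and Δ₃ ≥ 0. Let E_v = ![![ρ, 0, ρ_f, 0], ![0, ρ, 0, ρ_f], ![ρ_f, 0, m₁, 0], ![0, ρ_f, 0, m₃]] and L = ![![√(Δ₁/m₁), 0, ρ_f/√m₁, 0], ![0, √(Δ₃/m₃), 0, ρ_f/√m₃], ![0, 0, √m₁, 0], ![0, 0, 0, √m₃]]. Then L * Lᵀ = E_v. -/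
open Matrix Real

/-- Triangular factorization of the kinetic energy matrix: L * Lᵀ = E_v. -/
theorem kinetic_energy_matrix_factorization
    (ρ ρf m₁ m₃ : ℝ) (hm₁ : m₁ > 0) (hm₃ : m₃ > 0)
    (hΔ₁ : ρ * m₁ - ρf ^ 2 ≥ 0) (hΔ₃ : ρ * m₃ - ρf ^ 2 ≥ 0)
    (Ev L : Matrix (Fin 4) (Fin 4) ℝ)
    (hEv : Ev = Matrix.of
      ![![ρ, 0, ρf, 0],
        ![0, ρ, 0, ρf],
        ![ρf, 0, m₁, 0],
        ![0, ρf, 0, m₃]])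
    (hL : L = Matrix.of
      ![![Real.sqrt ((ρ * m₁ - ρf ^ 2) / m₁), 0, ρf / Real.sqrt m₁, 0],
        ![0, Real.sqrt ((ρ * m₃ - ρf ^ 2) / m₃), 0, ρf / Real.sqrt m₃],
        ![0, 0, Real.sqrt m₁, 0],
        ![0, 0, 0, Real.sqrt m₃]]) :
    L * Lᵀ = Ev := by
  have hs₁ : Real.sqrt m₁ > 0 := Real.sqrt_pos.mpr hm₁
  have hs₃ : Real.sqrt m₃ > 0 := Real.sqrt_pos.mpr hm₃
  have sq₁ : Real.sqrt m₁ * Real.sqrt m₁ = m₁ := Real.mul_self_sqrt hm₁.le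
  have sq₃ : Real.sqrt m₃ * Real.sqrt m₃ = m₃ := Real.mul_self_sqrt hm₃.le
  have sd₁ : Real.sqrt ((ρ * m₁ - ρf ^ 2) / m₁) * Real.sqrt ((ρ * m₁ - ρf ^ 2) / m₁)
      = (ρ * m₁ - ρf ^ 2) / m₁ := Real.mul_self_sqrt (by positivity)
  have sd₃ : Real.sqrt ((ρ * m₃ - ρf ^ 2) / m₃) * Real.sqrt ((ρ * m₃ - ρf ^ 2) / m₃)
      = (ρ * m₃ - ρf ^ 2) / m₃ := Real.mul_self_sqrt (by positivity)
  have hT : Lᵀ = Matrix.of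
      ![![Real.sqrt ((ρ * m₁ - ρf ^ 2) / m₁), 0, 0, 0],
        ![0, Real.sqrt ((ρ * m₃ - ρf ^ 2) / m₃), 0, 0],
        ![ρf / Real.sqrt m₁, 0, Real.sqrt m₁, 0],
        ![0, ρf / Real.sqrt m₃, 0, Real.sqrt m₃]] := by
    subst hL
    ext i j
    fin_cases i <;> fin_cases j <;> rfl
  rw [hT, hEv, hL]
  ext i j
  fin_cases i <;> fin_cases j <;>
    simp [Matrix.mul_apply, Fin.sum_univ_four] <;>
    field_simp <;>
    nlinarith [sq₁, sq₃, sd₁, sd₃, hs₁, hs₃,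
      congrArg₂ (· * ·) (Real.sq_sqrt (div_nonneg hΔ₁ hm₁.le)) (Real.sq_sqrt hm₁.le),
      congrArg₂ (· * ·) (Real.sq_sqrt (div_nonneg hΔ₃ hm₃.le)) (Real.sq_sqrt hm₃.le),
      div_mul_cancel₀ (ρ * m₁ - ρf ^ 2) hm₁.ne', div_mul_cancel₀ (ρ * m₃ - ρf ^ 2) hm₃.ne',
      congrArg (ρ * ·) (Real.sq_sqrt hm₁.le), congrArg (ρ * ·) (Real.sq_sqrt hm₃.le)]
end

section
/- Energy dissipation under the viscous source term: let ρ, ρ_f, m₁, m₃, η, κ₁, κ₃ be real numbers with η ≥ 0, κ₁ > 0, κ₃ > 0, Δ₁ := ρ·m₁ - ρ_f² ≠ 0, and Δ₃ := ρ·m₃ - ρ_f² ≠ 0; let E_v and D_v be the matrices E_v = ![![ρ, 0, ρ_f, 0], ![0, ρ, 0, ρ_f], ![ρ_f, 0, m₁, 0], ![0, ρ_f, 0, m₃]] and D_v = ![![0, 0, ρ_f·η/(Δ₁·κ₁), 0], ![0, 0, 0, ρ_f·η/(Δ₃·κ₃)], ![0, 0, -ρ·η/(Δ₁·κ₁), 0],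 ![0, 0, 0, -ρ·η/(Δ₃·κ₃)]]. If x : ℝ → ℝ⁴ is differentiable and satisfies x'(t) = D_v * x(t) for all t, then the energy function t ↦ x(t)ᵀ * E_v * x(t) is nonincreasing on ℝ. -/
open Matrix

/-- Energy dissipation under the viscous source term: along solutions of
x' = D_v x, the energy xᵀ E_v x is nonincreasing. -/
theorem viscous_source_energy_nonincreasing
    (ρ ρf m₁ m₃ η κ₁ κ₃ : ℝ) (hη : η ≥ 0) (hκ₁ : κ₁ > 0) (hκ₃ : κ₃ > 0)
    (hΔ₁ : ρ * m₁ - ρf ^ 2 ≠ 0) (hΔ₃ : ρ * m₃ - ρf ^ 2 ≠ 0)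
    (Ev Dv : Matrix (Fin 4) (Fin 4) ℝ)
    (hEv : Ev = Matrix.of
      ![![ρ, 0, ρf, 0],
        ![0, ρ, 0, ρf],
        ![ρf, 0, m₁, 0],
        ![0, ρf, 0, m₃]])
    (hDv : Dv = Matrix.of
      ![![0, 0, ρf * η / ((ρ * m₁ - ρf ^ 2) * κ₁), 0],
        ![0, 0, 0, ρf * η / ((ρ * m₃ - ρf ^ 2) * κ₃)],
        ![0, 0, -(ρ * η / ((ρ * m₁ - ρf ^ 2) * κ₁)), 0],
        ![0, 0, 0, -(ρ * η / ((ρ * m₃ - ρf ^ 2) * κ₃))]])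
    (x : ℝ → (Fin 4 → ℝ)) (hx : Differentiable ℝ x)
    (hode : ∀ t, deriv x t = Dv.mulVec (x t)) :
    Antitone (fun t => (x t) ⬝ᵥ Ev.mulVec (x t)) := by
  have hfun : (fun t => (x t) ⬝ᵥ Ev.mulVec (x t)) =
      fun t => ρ*(x t 0)^2 + ρ*(x t 1)^2 + m₁*(x t 2)^2 + m₃*(x t 3)^2
        + 2*ρf*(x t 0)*(x t 2) + 2*ρf*(x t 1)*(x t 3) := by
    funext t
    simp [hEv, Matrix.mulVec, dotProduct, Fin.sum_univ_four]
    ring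
  have key : ∀ t, HasDerivAt (fun t => (x t) ⬝ᵥ Ev.mulVec (x t))
      (-((2*η/κ₁) * (x t 2)^2 + (2*η/κ₃) * (x t 3)^2)) t := by
    intro t
    have hx' : HasDerivAt x (Dv.mulVec (x t)) t := by
      have := (hx t).hasDerivAt; rwa [hode] at this
    have hc := hasDerivAt_pi.mp hx'
    have h0 := hc 0; have h1 := hc 1; have h2 := hc 2; have h3 := hc 3
    have hd0 : Dv.mulVec (x t) 0 = ρf * η / ((ρ * m₁ - ρf ^ 2) * κ₁) * x t 2 := by
      simp [hDv, Matrix.mulVec, dotProduct, Fin.sum_univ_four]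
    have hd1 : Dv.mulVec (x t) 1 = ρf * η / ((ρ * m₃ - ρf ^ 2) * κ₃) * x t 3 := by
      simp [hDv, Matrix.mulVec, dotProduct, Fin.sum_univ_four]
    have hd2 : Dv.mulVec (x t) 2 = -(ρ * η / ((ρ * m₁ - ρf ^ 2) * κ₁)) * x t 2 := by
      simp [hDv, Matrix.mulVec, dotProduct, Fin.sum_univ_four]
    have hd3 : Dv.mulVec (x t) 3 = -(ρ * η / ((ρ * m₃ - ρf ^ 2) * κ₃)) * x t 3 := by
      simp [hDv, Matrix.mulVec, dotProduct, Fin.sum_univ_four]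
    rw [hd0] at h0; rw [hd1] at h1; rw [hd2] at h2; rw [hd3] at h3
    rw [hfun]
    have H := (((((((h0.pow 2).const_mul ρ).add ((h1.pow 2).const_mul ρ)).add
      ((h2.pow 2).const_mul m₁)).add ((h3.pow 2).const_mul m₃)).add
      (((h0.const_mul (2*ρf)).mul h2))).add ((h1.const_mul (2*ρf)).mul h3))
    refine H.congr_deriv ?_
    push_cast
    field_simp
    ring
  apply antitone_of_deriv_nonpos
  · exact fun t => (key t).differentiableAt
  · intro t
    rw [(key t).deriv]
    have : (2*η/κ₁) * (x t 2)^2 + (2*η/κ₃) * (x t 3)^2 ≥ 0 := by positivity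
    linarith
end
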